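/- arXiv:2311.17312 — 2 statements merged into one kernel-verified Lean document; each statement's English description precedes it below -/
import Mathlib

section
/- Let a = (a_1, …, a_m) be a strictly decreasing partition with m ≥ 2 and a_m = 1, let ε ∈ {0,1}^m with ε_m = 0, and let k ≥ 0. Then g(a, ε, k) = g(a', ε', k), where a' = (a_1, …, a_{m−1}) and ε' = (ε_1, …, ε_{m−1}). -/
namespace ChordExpansion

/-- The set of crossings of a chord diagram `E`, where a chord is an ordered pair `(u, v)`
with `u < v`, and a crossing is recorded as `((a, c), (b, d))` with `a < b < c < d`. -/
def crossings (E : Finset (ℕ × ℕ)) : Finset ((ℕ × ℕ) × (ℕ × ℕ)) :=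
  (E ×ˢ E).filter fun p => p.1.1 < p.2.1 ∧ p.2.1 < p.1.2 ∧ p.1.2 < p.2.2

/-- Encoding of a crossing as a natural number (used to pick a canonical crossing). -/
def encodeC (p : (ℕ × ℕ) × (ℕ × ℕ)) : ℕ :=
  Nat.pair (Nat.pair p.1.1 p.1.2) (Nat.pair p.2.1 p.2.2)

def decodeC (x : ℕ) : (ℕ × ℕ) × (ℕ × ℕ) :=
  ((x.unpair.1.unpair.1, x.unpair.1.unpair.2), (x.unpair.2.unpair.1, x.unpair.2.unpair.2))

/-- The canonical (least, in a fixed encoding) crossing of `E`. -/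
def canonCrossing (E : Finset (ℕ × ℕ)) : (ℕ × ℕ) × (ℕ × ℕ) :=
  decodeC (((crossings E).image encodeC).min.untopD 0)

/-- First result `E₁ = (E ∖ {ac, bd}) ∪ {ab, cd}` of expanding `E` at its canonical crossing. -/
def expand1 (E : Finset (ℕ × ℕ)) : Finset (ℕ × ℕ) :=
  (E \ {(canonCrossing E).1, (canonCrossing E).2}) ∪
    {((canonCrossing E).1.1, (canonCrossing E).2.1),
     ((canonCrossing E).1.2, (canonCrossing E).2.2)}

/-- Second result `E₂ = (E ∖ {ac, bd}) ∪ {ad, bc}` of expanding `E` at its canonical crossing. -/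
def expand2 (E : Finset (ℕ × ℕ)) : Finset (ℕ × ℕ) :=
  (E \ {(canonCrossing E).1, (canonCrossing E).2}) ∪
    {((canonCrossing E).1.1, (canonCrossing E).2.2),
     ((canonCrossing E).2.1, (canonCrossing E).1.2)}

/-- Fuel-based chord expansion number; since each expansion strictly decreases the number of
crossings, fuel `(crossings E).card` suffices. -/
def exAux : ℕ → Finset (ℕ × ℕ) → ℕ
  | 0, _ => 1
  | fuel + 1, E =>
    if crossings E = ∅ then 1
    else exAux fuel (expand1 E) + exAux fuel (expand2 E)

/-- The chord expansion number `ex(E)`. -/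
def exCD (E : Finset (ℕ × ℕ)) : ℕ := exAux (crossings E).card E

/-- Fuel-based chord expansion multiset. -/
def ncdAux : ℕ → Finset (ℕ × ℕ) → Multiset (Finset (ℕ × ℕ))
  | 0, E => {E}
  | fuel + 1, E =>
    if crossings E = ∅ then {E}
    else ncdAux fuel (expand1 E) + ncdAux fuel (expand2 E)

/-- The chord expansion multiset `𝒩𝒞𝒟(E)` of nonintersecting chord diagrams obtained by
iterated chord expansions. -/
def ncd (E : Finset (ℕ × ℕ)) : Multiset (Finset (ℕ × ℕ)) := ncdAux (crossings E).card E

/-- The chord diagram `E(a, ε)`: rows indexed by `1..m`, with `n = a 1` columns.  The points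
`x_1, …, x_m, z_1, …, z_n, y_n, …, y_1` in anticlockwise circular order are labelled
`x_i = i`, `z_j = m + j`, `y_j = m + 2n + 1 - j`. -/
def EDiag (m n : ℕ) (a ε : ℕ → ℕ) : Finset (ℕ × ℕ) :=
  ((Finset.Icc 1 m).filter fun i => ε i = 0).image (fun i => (i, m + 2 * n + 1 - a i)) ∪
  ((Finset.Icc 1 m).filter fun i => ε i = 1).image (fun i => (i, m + a i)) ∪
  ((Finset.Icc 1 n).filter fun j => j ∉ (Finset.Icc 1 m).image a).image
    (fun j => (m + j, m + 2 * n + 1 - j))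

/-- `e_F(U)`: the number of chords of `F` with both endpoints in `U`. -/
def eCh (F : Finset (ℕ × ℕ)) (U : Finset ℕ) : ℕ :=
  (F.filter fun c => c.1 ∈ U ∧ c.2 ∈ U).card

/-- `f(a, ε, k)`: the number of nonintersecting chord diagrams `F` in the chord expansion
multiset of `E(a, ε)` with `e_F(Y) + e_F(X ∪ Z) = k`, where `X ∪ Z` is labelled
`1..m+n` and `Y` is labelled `m+n+1..m+2n` (`n = a 1`). -/
def fCD (m : ℕ) (a ε : ℕ → ℕ) (k : ℕ) : ℕ :=
  Multiset.countP
    (fun F =>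
      eCh F (Finset.Icc (m + a 1 + 1) (m + 2 * a 1)) + eCh F (Finset.Icc 1 (m + a 1)) = k)
    (ncd (EDiag m (a 1) a ε))

/-- The boxes `(i, j)`, `1 ≤ i ≤ m`, `1 ≤ j ≤ a i`, of the Young diagram of shape `a`. -/
def boxes (m : ℕ) (a : ℕ → ℕ) : Finset (ℕ × ℕ) :=
  ((Finset.Icc 1 m) ×ˢ (Finset.Icc 1 (a 1))).filter fun p => p.2 ≤ a p.1

/-- `g(a, ε, k)`: the number of 0-1 Young diagrams of shape `a` (identified with the set `M`
of boxes carrying a `1`) such that every column has at most one `1`, row `i` has a number of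
`1`'s congruent to `ε i (mod 2)`, and there are exactly `k` `1`'s in total. -/
def gYD (m : ℕ) (a ε : ℕ → ℕ) (k : ℕ) : ℕ :=
  ((boxes m a).powerset.filter fun M =>
    (∀ j ∈ Finset.Icc 1 (a 1), (M.filter fun p => p.2 = j).card ≤ 1) ∧
    (∀ i ∈ Finset.Icc 1 m, (M.filter fun p => p.1 = i).card % 2 = ε i % 2) ∧
    M.card = k).card

/-- As `gYD`, but with no condition on the total number of `1`'s. -/
def gAll (m : ℕ) (a ε : ℕ → ℕ) : ℕ :=
  ((boxes m a).powerset.filter fun M =>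
    (∀ j ∈ Finset.Icc 1 (a 1), (M.filter fun p => p.2 = j).card ≤ 1) ∧
    (∀ i ∈ Finset.Icc 1 m, (M.filter fun p => p.1 = i).card % 2 = ε i % 2)).card


/-! The last row of the shape `a` is the single box `(m, 1)`, so it carries at most one `1`;
as its parity must be even, it carries none. Hence the admissible diagrams of shape `a` are
exactly those of shape `a'`. -/

lemma mem_boxes {m : ℕ} {a : ℕ → ℕ} {p : ℕ × ℕ} :
    p ∈ boxes m a ↔ (1 ≤ p.1 ∧ p.1 ≤ m) ∧ (1 ≤ p.2 ∧ p.2 ≤ a 1) ∧ p.2 ≤ a p.1 := by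
  simp [boxes, and_assoc]

lemma boxes_mono {m n : ℕ} (a : ℕ → ℕ) (h : m ≤ n) : boxes m a ⊆ boxes n a := fun p hp => by
  rw [mem_boxes] at hp ⊢
  omega

lemma card_filter_fst_eq_le_one {m i : ℕ} {a : ℕ → ℕ} {M : Finset (ℕ × ℕ)}
    (hM : M ⊆ boxes m a) (hi : a i ≤ 1) : (M.filter fun p => p.1 = i).card ≤ 1 := by
  refine Finset.card_le_one.2 fun p hp q hq => ?_
  rw [Finset.mem_filter] at hp hq
  have hp' := mem_boxes.1 (hM hp.1)
  have hq' := mem_boxes.1 (hM hq.1)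
  rw [hp.2] at hp'
  rw [hq.2] at hq'
  ext <;> omega

lemma subset_boxes_iff_filter_fst_eq_succ_eq_empty {n : ℕ} {a : ℕ → ℕ} {M : Finset (ℕ × ℕ)}
    (hM : M ⊆ boxes (n + 1) a) :
    M ⊆ boxes n a ↔ M.filter (fun p => p.1 = n + 1) = ∅ := by
  rw [Finset.filter_eq_empty_iff]
  refine ⟨fun h p hp => ?_, fun h p hp => ?_⟩
  · have := mem_boxes.1 (h hp)
    omega
  · have := mem_boxes.1 (hM hp)
    have := h hp
    rw [mem_boxes]
    omega

lemma row_parity_succ_iff {n : ℕ} {a ε : ℕ → ℕ} {M : Finset (ℕ × ℕ)}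
    (hM : M ⊆ boxes (n + 1) a) (ha : a (n + 1) ≤ 1) (hε : ε (n + 1) % 2 = 0) :
    (∀ i ∈ Finset.Icc 1 (n + 1), (M.filter fun p => p.1 = i).card % 2 = ε i % 2) ↔
      M ⊆ boxes n a ∧
        ∀ i ∈ Finset.Icc 1 n, (M.filter fun p => p.1 = i).card % 2 = ε i % 2 := by
  have hlast := card_filter_fst_eq_le_one hM ha
  rw [subset_boxes_iff_filter_fst_eq_succ_eq_empty hM, ← Finset.card_eq_zero,
    ← Finset.insert_Icc_right_eq_Icc_add_one (Nat.le_add_left 1 n), Finset.forall_mem_insert, hε]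
  exact and_congr_left fun _ => by omega

theorem g_lastRow_zero_general (m : ℕ) (a ε : ℕ → ℕ)
    (ham : a m = 1) (hεm : ε m = 0) (k : ℕ) :
    gYD m a ε k = gYD (m - 1) a ε k := by
  rcases m with _ | n
  · rfl
  rw [Nat.add_sub_cancel]
  unfold gYD
  congr 1
  ext M
  simp only [Finset.mem_filter, Finset.mem_powerset]
  constructor
  · rintro ⟨hM, hcol, hrow, hk⟩
    obtain ⟨hM', hrow'⟩ := (row_parity_succ_iff hM ham.le (by rw [hεm])).1 hrow
    exact ⟨hM', hcol, hrow', hk⟩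
  · rintro ⟨hM, hcol, hrow, hk⟩
    have hM' := hM.trans (boxes_mono a n.le_succ)
    exact ⟨hM', hcol, (row_parity_succ_iff hM' ham.le (by rw [hεm])).2 ⟨hM, hrow⟩, hk⟩

/-- **Case 1.1 of the proof of Theorem 1.** If `a m = 1` and `ε m = 0`, then
`g(a, ε, k) = g(a', ε', k)` where `a' = (a 1, …, a (m-1))` and `ε' = (ε 1, …, ε (m-1))`. -/
theorem g_lastRow_zero (m : ℕ) (hm : 2 ≤ m) (a ε : ℕ → ℕ)
    (ha : ∀ i, 1 ≤ i → i + 1 ≤ m → a (i + 1) < a i) (ham : a m = 1)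
    (hε : ∀ i ∈ Finset.Icc 1 m, ε i = 0 ∨ ε i = 1) (hεm : ε m = 0) (k : ℕ) :
    gYD m a ε k = gYD (m - 1) a ε k :=
  g_lastRow_zero_general m a ε ham hεm k

end ChordExpansion
end

section
/- Let E be a chord diagram and let e ∈ E be an isolated chord, i.e. a chord that crosses no other chord of E. Then ex(E) = ex(E ∖ {e}). -/
namespace ChordExpansion

/-- `E` is a chord diagram: each chord is an increasing pair and no two distinct chords
share an endpoint. -/
def IsChordDiagram (E : Finset (ℕ × ℕ)) : Prop :=
  (∀ c ∈ E, c.1 < c.2) ∧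
    ∀ c ∈ E, ∀ d ∈ E, c ≠ d → c.1 ≠ d.1 ∧ c.1 ≠ d.2 ∧ c.2 ≠ d.1 ∧ c.2 ≠ d.2

/-- The chords `c = (c.1, c.2)` and `d = (d.1, d.2)` cross: `c.1 < d.1 < c.2 < d.2`. -/
def Crosses (c d : ℕ × ℕ) : Prop := c.1 < d.1 ∧ d.1 < c.2 ∧ c.2 < d.2

/-!
An isolated chord `e` lies in no crossing, so `E` and `E ∖ {e}` have the same crossings and
hence the same canonical crossing; expanding there commutes with deleting `e`. Moreover `e` stays
isolated in both expansions: a chord whose endpoints avoid those of a crossing `{ac, bd}` and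
which crosses neither `ac` nor `bd` lies in one of the arcs cut out by `a, b, c, d`, so it also
avoids and does not cross `ab, cd, ad, bc`. Induction on the fuel of `exAux` concludes.
-/

def Separated (e d : ℕ × ℕ) : Prop :=
  (e.1 ≠ d.1 ∧ e.1 ≠ d.2 ∧ e.2 ≠ d.1 ∧ e.2 ≠ d.2) ∧ ¬Crosses e d ∧ ¬Crosses d e

def IsolatedIn (e : ℕ × ℕ) (E : Finset (ℕ × ℕ)) : Prop :=
  ∀ d ∈ E, d ≠ e → Separated e d

lemma Separated.ne {e d : ℕ × ℕ} (h : Separated e d) : d ≠ e := by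
  rintro rfl
  exact h.1.1 rfl

lemma Separated.resolve {e : ℕ × ℕ} {a b c d : ℕ} (hac : Separated e (a, c))
    (hbd : Separated e (b, d)) (hab : a < b) (hbc : b < c) (hcd : c < d) :
    Separated e (a, b) ∧ Separated e (c, d) ∧ Separated e (a, d) ∧ Separated e (b, c) := by
  simp only [Separated, Crosses] at *
  omega

lemma decodeC_encodeC (p : (ℕ × ℕ) × (ℕ × ℕ)) : decodeC (encodeC p) = p := by
  simp [decodeC, encodeC]

lemma canonCrossing_mem {E : Finset (ℕ × ℕ)} (h : crossings E ≠ ∅) :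
    canonCrossing E ∈ crossings E := by
  have hne : ((crossings E).image encodeC).Nonempty :=
    Finset.image_nonempty.2 (Finset.nonempty_iff_ne_empty.2 h)
  obtain ⟨m, hm⟩ := Finset.min_of_nonempty hne
  obtain ⟨p, hp, rfl⟩ := Finset.mem_image.mp (Finset.mem_of_min hm)
  rwa [canonCrossing, hm, WithTop.untopD_coe, decodeC_encodeC]

namespace IsolatedIn

variable {e : ℕ × ℕ} {E : Finset (ℕ × ℕ)}

lemma separated_of_mem_crossings (h : IsolatedIn e E) {p : (ℕ × ℕ) × (ℕ × ℕ)}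
    (hp : p ∈ crossings E) : Separated e p.1 ∧ Separated e p.2 := by
  simp only [crossings, Finset.mem_filter, Finset.mem_product] at hp
  obtain ⟨⟨h1, h2⟩, hcross⟩ := hp
  have h12 : p.1 ≠ p.2 := fun h => by rw [h] at hcross; exact lt_irrefl _ hcross.1
  have hne1 : p.1 ≠ e := by
    rintro rfl
    exact (h p.2 h2 h12.symm).2.1 hcross
  have hne2 : p.2 ≠ e := by
    rintro rfl
    exact (h p.1 h1 h12).2.2 hcross
  exact ⟨h p.1 h1 hne1, h p.2 h2 hne2⟩

lemma crossings_erase (h : IsolatedIn e E) : crossings (E.erase e) = crossings E := by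
  ext p
  simp only [crossings, Finset.mem_filter, Finset.mem_product, Finset.mem_erase]
  constructor
  · rintro ⟨⟨⟨_, h1⟩, _, h2⟩, hcross⟩
    exact ⟨⟨h1, h2⟩, hcross⟩
  · intro hp
    have hsep := h.separated_of_mem_crossings (by simpa only [crossings, Finset.mem_filter,
      Finset.mem_product] using hp)
    exact ⟨⟨⟨hsep.1.ne, hp.1.1⟩, hsep.2.ne, hp.1.2⟩, hp.2⟩

lemma canonCrossing_erase (h : IsolatedIn e E) : canonCrossing (E.erase e) = canonCrossing E := by
  rw [canonCrossing, canonCrossing, h.crossings_erase]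

lemma separated_resolutions (h : IsolatedIn e E) (hE : crossings E ≠ ∅) :
    let S := canonCrossing E
    Separated e (S.1.1, S.2.1) ∧ Separated e (S.1.2, S.2.2) ∧
      Separated e (S.1.1, S.2.2) ∧ Separated e (S.2.1, S.1.2) := by
  have hS := canonCrossing_mem hE
  obtain ⟨hsep1, hsep2⟩ := h.separated_of_mem_crossings hS
  simp only [crossings, Finset.mem_filter] at hS
  exact Separated.resolve hsep1 hsep2 hS.2.1 hS.2.2.1 hS.2.2.2

lemma sdiff_union {A s t : Finset (ℕ × ℕ)} (h : IsolatedIn e A)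
    (ht : ∀ d ∈ t, Separated e d) : IsolatedIn e (A \ s ∪ t) := by
  intro d hd hde
  rcases Finset.mem_union.mp hd with hd | hd
  · exact h d (Finset.mem_sdiff.mp hd).1 hde
  · exact ht d hd

lemma expand1 (h : IsolatedIn e E) (hE : crossings E ≠ ∅) : IsolatedIn e (expand1 E) := by
  obtain ⟨h1, h2, -, -⟩ := h.separated_resolutions hE
  refine h.sdiff_union ?_
  simpa using ⟨h1, h2⟩

lemma expand2 (h : IsolatedIn e E) (hE : crossings E ≠ ∅) : IsolatedIn e (expand2 E) := by
  obtain ⟨-, -, h1, h2⟩ := h.separated_resolutions hE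
  refine h.sdiff_union ?_
  simpa using ⟨h1, h2⟩

end IsolatedIn

lemma erase_sdiff_union {α : Type*} [DecidableEq α] {A s t : Finset α} {e : α} (ht : e ∉ t) :
    A.erase e \ s ∪ t = (A \ s ∪ t).erase e := by
  rw [Finset.erase_union_distrib, Finset.erase_sdiff_comm, Finset.erase_eq_of_notMem ht]

lemma expand1_erase {e : ℕ × ℕ} {E : Finset (ℕ × ℕ)} (h : IsolatedIn e E)
    (hE : crossings E ≠ ∅) : expand1 (E.erase e) = (expand1 E).erase e := by
  obtain ⟨h1, h2, -, -⟩ := h.separated_resolutions hE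
  rw [expand1, expand1, h.canonCrossing_erase]
  exact erase_sdiff_union (by simp [h1.ne.symm, h2.ne.symm])

lemma expand2_erase {e : ℕ × ℕ} {E : Finset (ℕ × ℕ)} (h : IsolatedIn e E)
    (hE : crossings E ≠ ∅) : expand2 (E.erase e) = (expand2 E).erase e := by
  obtain ⟨-, -, h1, h2⟩ := h.separated_resolutions hE
  rw [expand2, expand2, h.canonCrossing_erase]
  exact erase_sdiff_union (by simp [h1.ne.symm, h2.ne.symm])

lemma exAux_erase (n : ℕ) {e : ℕ × ℕ} {E : Finset (ℕ × ℕ)} (h : IsolatedIn e E) :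
    exAux n (E.erase e) = exAux n E := by
  induction n generalizing E with
  | zero => rfl
  | succ n ih =>
    rw [exAux, exAux, h.crossings_erase]
    split_ifs with hE
    · rfl
    · rw [expand1_erase h hE, expand2_erase h hE, ih (h.expand1 hE), ih (h.expand2 hE)]

/-- Deleting an isolated chord does not change the chord expansion number. -/
theorem ex_erase_isolated (E : Finset (ℕ × ℕ)) (hE : IsChordDiagram E) (e : ℕ × ℕ)
    (he : e ∈ E) (hiso : ∀ d ∈ E, d ≠ e → ¬Crosses e d ∧ ¬Crosses d e) :
    exCD E = exCD (E.erase e) := by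
  have hisolated : IsolatedIn e E := fun d hd hde => ⟨hE.2 e he d hd hde.symm, hiso d hd hde⟩
  rw [exCD, exCD, hisolated.crossings_erase, exAux_erase _ hisolated]

end ChordExpansion
end
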